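/- Let ⟨𝒬, Q₀⟩ be the instance produced by the reduction from an OGTP instance ⟨𝒮, ℱ⟩, and let H ∈ Ω(𝒬↔, D₀) be a final position of a play of Escape(Q₀, 𝒬) starting from D₀ = (G(q))[a,b] with q ∈ Q_start. If for some vertices x, y of H and some L ∈ 𝒬_bad ∪ 𝒬_ugly it holds that H ⊨ (G(L))(x,y) or H ⊨ (R(L))(x,y), then H ⊨ (R(Q₀))(a,b), i.e. Fugitive loses (Principle II: Fugitive must never allow any request generated by 𝒬_bad ∪ 𝒬_ugly to form). -/
import Mathlib


/-- A graph database (structure) over vertex type `V` and edge-label alphabet `γ`: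
`D x c y` means that there is an edge from `x` to `y` labeled with `c`. -/
def DB (V γ : Type) : Type := V → γ → V → Prop

/-- `pathSat D x w y` : the structure `D` satisfies `w(x,y)`, i.e. there is a directed
path from `x` to `y` whose consecutive edge labels spell the word `w`. -/
def pathSat {V γ : Type} (D : DB V γ) : V → List γ → V → Prop
  | x, [], y => x = y
  | x, c :: w, y => ∃ z, D x c z ∧ pathSat D z w y

/-- `D ⊨ L(x,y)` for a language `L` : some word of `L` labels a path from `x` to `y`. -/
def langSat {V γ : Type} (D : DB V γ) (L : Language γ) (x y : V) : Prop :=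
  ∃ w ∈ L, pathSat D x w y

/-- The answer `L(D)` of the path query given by the language `L` on the database `D`. -/
def qry {V γ : Type} (L : Language γ) (D : DB V γ) : Set (V × V) :=
  { p | langSat D L p.1 p.2 }

/-- All edge labels of `D` lie in the set `A`. -/
def labelsIn {V γ : Type} (D : DB V γ) (A : Set γ) : Prop :=
  ∀ x c y, D x c y → c ∈ A

/-- A language is regular iff it is the language of some regular expression. -/
def IsRegularLang {γ : Type} (L : Language γ) : Prop :=
  ∃ r : RegularExpression γ, r.matches' = L

/-! ### Red-green signature.  A letter of `Σ̄` is a pair `(color, a)` with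
`color = true` meaning green and `color = false` meaning red. -/

/-- The green copy `G(w)` of a word `w`. -/
def greenW {γ : Type} (w : List γ) : List (Bool × γ) := w.map (fun c => (true, c))

/-- The red copy `R(w)` of a word `w`. -/
def redW {γ : Type} (w : List γ) : List (Bool × γ) := w.map (fun c => (false, c))

/-- The green copy `G(L)` of a language `L`. -/
def greenL {γ : Type} (L : Language γ) : Language (Bool × γ) := greenW '' L

/-- The red copy `R(L)` of a language `L`. -/
def redL {γ : Type} (L : Language γ) : Language (Bool × γ) := redW '' L

/-- A constraint `L → L'` given by a pair of languages,
meaning `∀ x y, L(x,y) ⇒ L'(x,y)`. -/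
structure RCon (γ : Type) where
  lhs : Language γ
  rhs : Language γ

/-- `D ⊨ t` for a single constraint `t`. -/
def satRC {V γ : Type} (D : DB V γ) (t : RCon γ) : Prop :=
  ∀ x y, langSat D t.lhs x y → langSat D t.rhs x y

/-- `D ⊨ T` for a set `T` of constraints. -/
def satRCs {V γ : Type} (D : DB V γ) (T : Set (RCon γ)) : Prop :=
  ∀ t ∈ T, satRC D t

/-- `L→`, the regular constraint `G(L) → R(L)`. -/
def rcFwd {γ : Type} (L : Language γ) : RCon (Bool × γ) := ⟨greenL L, redL L⟩

/-- `L←`, the regular constraint `R(L) → G(L)`. -/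
def rcBwd {γ : Type} (L : Language γ) : RCon (Bool × γ) := ⟨redL L, greenL L⟩

/-- `𝒬↔ = ⋃_{L ∈ 𝒬} {L→, L←}`. -/
def biRC {γ : Type} (Qs : Set (Language γ)) : Set (RCon (Bool × γ)) :=
  rcFwd '' Qs ∪ rcBwd '' Qs

/-- A request is a triple `⟨x, y, t⟩`. -/
abbrev Req (V γ : Type) := V × V × RCon γ

/-- `rq T D` : the set of requests `⟨x,y,L→L'⟩` with `L → L' ∈ T`, `D ⊨ L(x,y)`
and `D ⊭ L'(x,y)`. -/
def rq {V γ : Type} (T : Set (RCon γ)) (D : DB V γ) : Set (Req V γ) :=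
  { r | r.2.2 ∈ T ∧ langSat D r.2.2.lhs r.1 r.2.1 ∧ ¬ langSat D r.2.2.rhs r.1 r.2.1 }

/-- A vertex of (i.e. active in) the structure `D`. -/
def activeV {V γ : Type} (D : DB V γ) (v : V) : Prop :=
  ∃ c u, D v c u ∨ D u c v

/-- The edge set of a chain whose consecutive vertices are listed in the first argument
and whose edge labels spell the second argument.  -/
def chainOf {V γ : Type} : List V → List γ → DB V γ
  | u :: v :: vs, c :: w => fun p d q => (p = u ∧ d = c ∧ q = v) ∨ chainOf (v :: vs) w p d q
  | _, _ => fun _ _ _ => False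

/-- `D` is (exactly) the chain structure `w[x,y]` : its edges form a chain from `x` to `y`
labeled `w`, whose internal vertices are pairwise distinct and distinct from `x, y`. -/
def IsChainStruct {V γ : Type} (D : DB V γ) (x : V) (w : List γ) (y : V) : Prop :=
  ∃ vs : List V, vs.length + 1 = w.length ∧ (x :: vs ++ [y]).Nodup ∧
    ∀ p c q, D p c q ↔ chainOf (x :: vs ++ [y]) w p c q

/-- `Step T D D'` : `D'` is obtained from `D` by simultaneously satisfying every request of
`rq T D` : for each request `⟨x,y,t⟩` a word `w` of the right-hand side of `t` is chosen and a
fresh path `w[x,y]` is added, the internal vertices of all the added paths being new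
(not vertices of `D`) and pairwise distinct. -/
def Step {V γ : Type} (T : Set (RCon γ)) (D D' : DB V γ) : Prop :=
  ∃ (wch : Req V γ → List γ) (vch : Req V γ → List V),
    (∀ r ∈ rq T D,
      wch r ∈ (r.2.2).rhs ∧ (vch r).length + 1 = (wch r).length ∧ (vch r).Nodup ∧
      ∀ v ∈ vch r, ¬ activeV D v ∧ v ≠ r.1 ∧ v ≠ r.2.1) ∧
    (∀ r ∈ rq T D, ∀ r' ∈ rq T D, r ≠ r' → ∀ v ∈ vch r, v ∉ vch r') ∧
    ∀ p c q, D' p c q ↔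
      (D p c q ∨ ∃ r ∈ rq T D, chainOf (r.1 :: vch r ++ [r.2.1]) (wch r) p c q)

/-- `H ∈ Ω(T, D₀)` : `H` is a final position, namely the union of a play
`D₀, D₁, D₂, …` with `Step T Dᵢ Dᵢ₊₁` for all `i`. -/
def FinalPos {V γ : Type} (T : Set (RCon γ)) (D₀ H : DB V γ) : Prop :=
  ∃ seq : ℕ → DB V γ, seq 0 = D₀ ∧ (∀ i, Step T (seq i) (seq (i + 1))) ∧
    ∀ p c q, H p c q ↔ ∃ i, seq i p c q

/-- `h` is a homomorphism from `D` to `M`. -/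
def IsHom {V W γ : Type} (D : DB V γ) (M : DB W γ) (h : V → W) : Prop :=
  ∀ x c y, D x c y → M (h x) c (h y)

/-! ### The alphabet of the reduction.
`Σ = {α, β, ω} ∪ Σ₀` with `Σ₀ = {A,B} × {H,V} × {W,C} × 𝒮`.
Conventions: in `Sig.base ab dir temp shade`,
`ab = true` means `A` and `ab = false` means `B`;
`dir = false` means `H` (horizontal) and `dir = true` means `V` (vertical);
`temp = true` means `W` (warm) and `temp = false` means `C` (cold);
shades are natural numbers, `black := 0`. -/
inductive Sig : Type where
  | alpha : Sig
  | beta : Sig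
  | omega : Sig
  | base : Bool → Bool → Bool → ℕ → Sig
deriving DecidableEq

/-- `c` is a letter of `Σ₀` (its shade belonging to `S`). -/
def inSigma0 (S : Finset ℕ) : Sig → Prop
  | .base _ _ _ s => s ∈ S
  | _ => False

/-- `c` is a letter of `Σ₀` with the indicated first three components
(its shade ranging over `S`). -/
def isL (S : Finset ℕ) (ab dir temp : Bool) (c : Sig) : Prop :=
  ∃ s ∈ S, c = Sig.base ab dir temp s

/-- All letters of the word `u` belong to `Σ₀`. -/
def allS0 (S : Finset ℕ) (u : List Sig) : Prop := ∀ c ∈ u, inSigma0 S c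

/-- `Q¹ = ω`. -/
def Qg1 : Language Sig := {[Sig.omega]}

/-- `Q² = α + β`. -/
def Qg2 : Language Sig := {[Sig.alpha], [Sig.beta]}

/-- `[B H W][A V W]`, the first summand of `Q³`. -/
def Qg3a (S : Finset ℕ) : Language Sig :=
  { w | ∃ c1 c2, w = [c1, c2] ∧ isL S false false true c1 ∧ isL S true true true c2 }

/-- `[B V C][A H C]`, the second summand of `Q³`. -/
def Qg3b (S : Finset ℕ) : Language Sig :=
  { w | ∃ c1 c2, w = [c1, c2] ∧ isL S false true false c1 ∧ isL S true false false c2 }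

/-- `[A H C][B V C]`, the first summand of `Q⁴`. -/
def Qg4a (S : Finset ℕ) : Language Sig :=
  { w | ∃ c1 c2, w = [c1, c2] ∧ isL S true false false c1 ∧ isL S false true false c2 }

/-- `[A V W][B H W]`, the second summand of `Q⁴`. -/
def Qg4b (S : Finset ℕ) : Language Sig :=
  { w | ∃ c1 c2, w = [c1, c2] ∧ isL S true true true c1 ∧ isL S false false true c2 }

/-- `[B V C]`, the first summand of `Q⁵`. -/
def Qg5a (S : Finset ℕ) : Language Sig := { w | ∃ c, w = [c] ∧ isL S false true false c }

/-- `[B V W]`, the second summand of `Q⁵`. -/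
def Qg5b (S : Finset ℕ) : Language Sig := { w | ∃ c, w = [c] ∧ isL S false true true c }

/-- `[B H W]`, the first summand of `Q⁶`. -/
def Qg6a (S : Finset ℕ) : Language Sig := { w | ∃ c, w = [c] ∧ isL S false false true c }

/-- `[B H C]`, the second summand of `Q⁶`. -/
def Qg6b (S : Finset ℕ) : Language Sig := { w | ∃ c, w = [c] ∧ isL S false false false c }

/-- `[A V W]`, the first summand of `Q⁷`. -/
def Qg7a (S : Finset ℕ) : Language Sig := { w | ∃ c, w = [c] ∧ isL S true true true c }

/-- `[A V C]`, the second summand of `Q⁷`. -/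
def Qg7b (S : Finset ℕ) : Language Sig := { w | ∃ c, w = [c] ∧ isL S true true false c }

/-- `[A H C]`, the first summand of `Q⁸`. -/
def Qg8a (S : Finset ℕ) : Language Sig := { w | ∃ c, w = [c] ∧ isL S true false false c }

/-- `[A H W]`, the second summand of `Q⁸`. -/
def Qg8b (S : Finset ℕ) : Language Sig := { w | ∃ c, w = [c] ∧ isL S true false true c }

/-- `𝒬_good`, the set of 8 good languages. -/
def Qgood (S : Finset ℕ) : Set (Language Sig) :=
  {Qg1, Qg2, Qg3a S + Qg3b S, Qg4a S + Qg4b S, Qg5a S + Qg5b S,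
   Qg6a S + Qg6b S, Qg7a S + Qg7b S, Qg8a S + Qg8b S}

/-- `β (Σ_{s ∈ 𝒮∖{black}} [A V W s]) Σ₀* ω`. -/
def Qbad1 (S : Finset ℕ) : Language Sig :=
  { w | ∃ s u, s ∈ S ∧ s ≠ 0 ∧ allS0 S u ∧
      w = Sig.beta :: Sig.base true true true s :: (u ++ [Sig.omega]) }

/-- `β Σ₀* (Σ_{s ∈ 𝒮∖{black}} [B H W s]) ω`. -/
def Qbad2 (S : Finset ℕ) : Language Sig :=
  { w | ∃ s u, s ∈ S ∧ s ≠ 0 ∧ allS0 S u ∧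
      w = Sig.beta :: (u ++ [Sig.base false false true s, Sig.omega]) }

/-- `β Σ₀* [• d W s][• d' W s'] Σ₀* ω`, for a forbidden pair `⟨(d,s),(d',s')⟩`. -/
def QbadF (S : Finset ℕ) (d : Bool) (s : ℕ) (d' : Bool) (s' : ℕ) : Language Sig :=
  { w | ∃ u u', ∃ b b' : Bool, allS0 S u ∧ allS0 S u' ∧
      w = Sig.beta :: (u ++ Sig.base b d true s :: Sig.base b' d' true s' :: (u' ++ [Sig.omega])) }

/-- `𝒬_bad`. -/
def Qbad (S : Finset ℕ) (F : Finset ((Bool × ℕ) × (Bool × ℕ))) : Set (Language Sig) :=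
  {Qbad1 S, Qbad2 S} ∪ { L | ∃ p ∈ F, L = QbadF S p.1.1 p.1.2 p.2.1 p.2.2 }

/-- `α Σ₀* [• • W] Σ₀* ω`. -/
def Qugly1 (S : Finset ℕ) : Language Sig :=
  { w | ∃ u c u', allS0 S u ∧ allS0 S u' ∧ inSigma0 S c ∧
      (∃ ab d s, c = Sig.base ab d true s) ∧
      w = Sig.alpha :: (u ++ c :: (u' ++ [Sig.omega])) }

/-- `β Σ₀* [• • C] Σ₀* ω`. -/
def Qugly2 (S : Finset ℕ) : Language Sig :=
  { w | ∃ u c u', allS0 S u ∧ allS0 S u' ∧ inSigma0 S c ∧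
      (∃ ab d s, c = Sig.base ab d false s) ∧
      w = Sig.beta :: (u ++ c :: (u' ++ [Sig.omega])) }

/-- `𝒬_ugly`. -/
def Qugly (S : Finset ℕ) : Set (Language Sig) := {Qugly1 S, Qugly2 S}

/-- `𝒬 = 𝒬_good ∪ 𝒬_bad ∪ 𝒬_ugly`. -/
def QQ (S : Finset ℕ) (F : Finset ((Bool × ℕ) × (Bool × ℕ))) : Set (Language Sig) :=
  Qgood S ∪ Qbad S F ∪ Qugly S

/-- `[A H C][B V C]`, the repeated block of `Q_start`. -/
def startBlock (S : Finset ℕ) : Language Sig :=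
  { w | ∃ c1 c2, w = [c1, c2] ∧ isL S true false false c1 ∧ isL S false true false c2 }

/-- `Q_start = α ([A H C][B V C])⁺ ω`. -/
def Qstart (S : Finset ℕ) : Language Sig :=
  { w | ∃ u, u ∈ KStar.kstar (startBlock S) ∧ u ≠ [] ∧ w = Sig.alpha :: (u ++ [Sig.omega]) }

/-- The sum of the languages `QbadF` over all forbidden pairs of `F`. -/
def QbadFSum (S : Finset ℕ) (F : Finset ((Bool × ℕ) × (Bool × ℕ))) : Language Sig :=
  { w | ∃ p ∈ F, w ∈ QbadF S p.1.1 p.1.2 p.2.1 p.2.2 }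

/-- `Q₀ = Q_start + Σ_{L ∈ 𝒬_bad ∪ 𝒬_ugly} L`. -/
def Q0L (S : Finset ℕ) (F : Finset ((Bool × ℕ) × (Bool × ℕ))) : Language Sig :=
  Qstart S + Qbad1 S + Qbad2 S + QbadFSum S F + Qugly1 S + Qugly2 S

/-- The alphabet `Σ = {α, β, ω} ∪ Σ₀` of the reduction, as a set of letters. -/
def SigAlph (S : Finset ℕ) : Set Sig :=
  {Sig.alpha, Sig.beta, Sig.omega} ∪ { c | inSigma0 S c }

section AuxGeneric
variable {V γ : Type}

lemma pathSat_mono {D D' : DB V γ} (h : ∀ p c q, D p c q → D' p c q) :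
    ∀ {w : List γ} {x y : V}, pathSat D x w y → pathSat D' x w y := by
  intro w
  induction w with
  | nil => intro x y hp; exact hp
  | cons c w ih =>
    rintro x y ⟨z, hz, hp⟩
    exact ⟨z, h _ _ _ hz, ih hp⟩

lemma chainOf_mem : ∀ (w : List γ) (l : List V) {p : V} {d : γ} {q : V},
    chainOf l w p d q → d ∈ w := by
  intro w
  induction w with
  | nil =>
    intro l p d q h
    match l with
    | [] => exact h.elim
    | [u] => exact h.elim
    | u :: v :: vs => exact h.elim
  | cons c w ih =>
    intro l p d q h
    match l with
    | [] => exact h.elim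
    | [u] => exact h.elim
    | u :: v :: vs =>
      rcases h with ⟨_, hd, _⟩ | h
      · simp [hd]
      · exact List.mem_cons_of_mem _ (ih (v :: vs) h)

lemma chainOf_head {u : V} {l : List V} {c : γ} {w : List γ} {p : V} {d : γ} {q : V}
    (h : chainOf (u :: l) (c :: w) p d q) (hd : d ∉ w) : p = u := by
  match l with
  | [] => exact h.elim
  | v :: vs =>
    rcases h with ⟨hp, _, _⟩ | h
    · exact hp
    · exact absurd (chainOf_mem w _ h) hd

lemma chainOf_last : ∀ (w : List γ) (l : List V) (u y : V) {d : γ} {p q : V},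
    l.length = w.length → chainOf (u :: (l ++ [y])) (w ++ [d]) p d q → d ∉ w → q = y := by
  intro w
  induction w with
  | nil =>
    intro l u y d p q hlen h _
    have hl : l = [] := List.length_eq_zero_iff.mp hlen
    subst hl
    rcases h with ⟨_, _, hq⟩ | h
    · exact hq
    · exact h.elim
  | cons c w ih =>
    intro l u y d p q hlen h hd
    cases l with
    | nil => simp at hlen
    | cons v vs =>
      rcases h with ⟨_, hdc, _⟩ | h
      · exact absurd (by simp [hdc]) hd
      · exact ih vs v y (by simpa using hlen) h (fun hm => hd (List.mem_cons_of_mem _ hm))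

lemma chainOf_pathSat : ∀ (w : List γ) (vs : List V) (x y : V) (D : DB V γ),
    vs.length + 1 = w.length →
    (∀ p c q, chainOf (x :: (vs ++ [y])) w p c q → D p c q) →
    pathSat D x w y := by
  intro w
  induction w with
  | nil => intro vs x y D hlen _; simp at hlen
  | cons c w ih =>
    intro vs x y D hlen hsub
    cases vs with
    | nil =>
      cases w with
      | nil =>
        refine ⟨y, ?_, rfl⟩
        exact hsub _ _ _ (Or.inl ⟨rfl, rfl, rfl⟩)
      | cons _ _ => simp at hlen
    | cons v vs' =>
      refine ⟨v, hsub _ _ _ (Or.inl ⟨rfl, rfl, rfl⟩), ?_⟩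
      exact ih vs' v y D (by simpa using hlen)
        (fun p c' q' h => hsub p c' q' (Or.inr h))

lemma pathSat_last {D : DB V γ} : ∀ (w : List γ) (x : V) {d : γ} {y : V},
    pathSat D x (w ++ [d]) y → ∃ z, D z d y := by
  intro w
  induction w with
  | nil =>
    rintro x d y ⟨z, hz, hp⟩
    exact ⟨x, hp ▸ hz⟩
  | cons c w ih =>
    rintro x d y ⟨z, _, hp⟩
    exact ih z hp

lemma Step.subset {T : Set (RCon γ)} {D D' : DB V γ} (h : Step T D D') :
    ∀ p c q, D p c q → D' p c q := by
  obtain ⟨wch, vch, _, _, h3⟩ := h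
  intro p c q hp
  exact (h3 p c q).mpr (Or.inl hp)

lemma seq_mono {T : Set (RCon γ)} {seq : ℕ → DB V γ}
    (hs : ∀ i, Step T (seq i) (seq (i + 1))) {i j : ℕ} (hij : i ≤ j) :
    ∀ p c q, seq i p c q → seq j p c q := by
  induction j with
  | zero =>
    intro p c q h
    have : i = 0 := Nat.le_zero.mp hij
    exact this ▸ h
  | succ j ih =>
    intro p c q h
    rcases Nat.lt_or_ge i (j + 1) with hlt | hge
    · exact (hs j).subset p c q (ih (Nat.lt_succ_iff.mp hlt) p c q h)
    · have : i = j + 1 := le_antisymm hij hge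
      exact this ▸ h

lemma pathSat_exists_index {T : Set (RCon γ)} {seq : ℕ → DB V γ} {H : DB V γ}
    (hs : ∀ i, Step T (seq i) (seq (i + 1)))
    (hH : ∀ p c q, H p c q ↔ ∃ i, seq i p c q) :
    ∀ (w : List γ) (x y : V), pathSat H x w y → ∃ i, pathSat (seq i) x w y := by
  intro w
  induction w with
  | nil => intro x y h; exact ⟨0, h⟩
  | cons c w ih =>
    rintro x y ⟨z, hz, hp⟩
    obtain ⟨i, hi⟩ := (hH x c z).mp hz
    obtain ⟨j, hj⟩ := ih z y hp
    exact ⟨max i j, z, seq_mono hs (le_max_left i j) _ _ _ hi,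
      pathSat_mono (seq_mono hs (le_max_right i j)) hj⟩

lemma final_sat {T : Set (RCon γ)} {D₀ H : DB V γ} (hH : FinalPos T D₀ H) :
    satRCs H T := by
  obtain ⟨seq, h0, hs, hlim⟩ := hH
  rintro t ht x y ⟨w, hw, hp⟩
  obtain ⟨i, hi⟩ := pathSat_exists_index hs hlim w x y hp
  by_cases hr : langSat (seq i) t.rhs x y
  · obtain ⟨w', hw', hp'⟩ := hr
    exact ⟨w', hw', pathSat_mono (fun p c q h => (hlim p c q).mpr ⟨i, h⟩) hp'⟩
  · have hrq : ((x, y, t) : Req V γ) ∈ rq T (seq i) := ⟨ht, ⟨w, hw, hi⟩, hr⟩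
    obtain ⟨wch, vch, h1, _, h3⟩ := hs i
    obtain ⟨hw1, hlen, -, -⟩ := h1 _ hrq
    have hpath : pathSat (seq (i + 1)) x (wch (x, y, t)) y := by
      apply chainOf_pathSat _ _ _ _ _ hlen
      intro p c q hc
      exact (h3 p c q).mpr (Or.inr ⟨(x, y, t), hrq, hc⟩)
    exact ⟨_, hw1, pathSat_mono (fun p c q h => (hlim p c q).mpr ⟨i + 1, h⟩) hpath⟩

end AuxGeneric
section AuxSig

def colW (col : Bool) (w : List Sig) : List (Bool × Sig) := w.map (fun c => (col, c))

lemma greenL_eq (L : Language Sig) : greenL L = colW true '' L := rfl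
lemma redL_eq (L : Language Sig) : redL L = colW false '' L := rfl

def noAB (w : List Sig) : Prop := ∀ c ∈ w, c ≠ Sig.alpha ∧ c ≠ Sig.beta
def noOm (w : List Sig) : Prop := ∀ c ∈ w, c ≠ Sig.omega

def SafeL (L : Language Sig) : Prop :=
  ((∀ w ∈ L, noAB w) ∨
    ∀ w ∈ L, ∃ c w', (c = Sig.alpha ∨ c = Sig.beta) ∧ w = c :: w' ∧ noAB w') ∧
  ((∀ w ∈ L, noOm w) ∨ ∀ w ∈ L, ∃ w', w = w' ++ [Sig.omega] ∧ noOm w')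

lemma inSigma0_ne {S : Finset ℕ} {c : Sig} (h : inSigma0 S c) :
    c ≠ Sig.alpha ∧ c ≠ Sig.beta ∧ c ≠ Sig.omega := by
  cases c <;> simp [inSigma0] at h ⊢

lemma isL_ne {S : Finset ℕ} {ab d t : Bool} {c : Sig} (h : isL S ab d t c) :
    c ≠ Sig.alpha ∧ c ≠ Sig.beta ∧ c ≠ Sig.omega := by
  obtain ⟨s, -, rfl⟩ := h; simp

lemma noAB_nil : noAB [] := by intro c hc; simp at hc
lemma noOm_nil : noOm [] := by intro c hc; simp at hc

lemma noAB_cons {c : Sig} {w : List Sig} (h1 : c ≠ Sig.alpha ∧ c ≠ Sig.beta)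
    (h2 : noAB w) : noAB (c :: w) := by
  intro d hd
  rcases List.mem_cons.mp hd with rfl | hd
  · exact h1
  · exact h2 d hd

lemma noOm_cons {c : Sig} {w : List Sig} (h1 : c ≠ Sig.omega) (h2 : noOm w) :
    noOm (c :: w) := by
  intro d hd
  rcases List.mem_cons.mp hd with rfl | hd
  · exact h1
  · exact h2 d hd

lemma noAB_append {w1 w2 : List Sig} (h1 : noAB w1) (h2 : noAB w2) : noAB (w1 ++ w2) := by
  intro d hd
  rcases List.mem_append.mp hd with hd | hd
  · exact h1 d hd
  · exact h2 d hd

lemma noOm_append {w1 w2 : List Sig} (h1 : noOm w1) (h2 : noOm w2) : noOm (w1 ++ w2) := by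
  intro d hd
  rcases List.mem_append.mp hd with hd | hd
  · exact h1 d hd
  · exact h2 d hd

lemma noAB_of_allS0 {S : Finset ℕ} {u : List Sig} (h : allS0 S u) : noAB u :=
  fun c hc => ⟨(inSigma0_ne (h c hc)).1, (inSigma0_ne (h c hc)).2.1⟩

lemma noOm_of_allS0 {S : Finset ℕ} {u : List Sig} (h : allS0 S u) : noOm u :=
  fun c hc => (inSigma0_ne (h c hc)).2.2

lemma safe_of_base {L : Language Sig}
    (h : ∀ w ∈ L, ∀ c ∈ w, c ≠ Sig.alpha ∧ c ≠ Sig.beta ∧ c ≠ Sig.omega) : SafeL L :=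
  ⟨Or.inl fun w hw c hc => ⟨(h w hw c hc).1, (h w hw c hc).2.1⟩,
   Or.inl fun w hw c hc => (h w hw c hc).2.2⟩

lemma safe_two {S : Finset ℕ} {L1 L2 : Language Sig}
    (h1 : ∀ w ∈ L1, ∃ c1 c2, w = [c1, c2] ∧
      (∃ a b t, isL S a b t c1) ∧ (∃ a b t, isL S a b t c2))
    (h2 : ∀ w ∈ L2, ∃ c1 c2, w = [c1, c2] ∧
      (∃ a b t, isL S a b t c1) ∧ (∃ a b t, isL S a b t c2)) :
    SafeL (L1 + L2) := by
  apply safe_of_base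
  intro w hw
  have hw' : ∃ c1 c2, w = [c1, c2] ∧
      (∃ a b t, isL S a b t c1) ∧ (∃ a b t, isL S a b t c2) := by
    rcases (Language.mem_add L1 L2 w).mp hw with h | h
    · exact h1 w h
    · exact h2 w h
  obtain ⟨c1, c2, rfl, ⟨a1, b1, t1, hc1⟩, ⟨a2, b2, t2, hc2⟩⟩ := hw'
  intro c hc
  rcases List.mem_cons.mp hc with rfl | hc
  · exact isL_ne hc1
  · rcases List.mem_cons.mp hc with rfl | hc
    · exact isL_ne hc2
    · simp at hc

lemma safe_one {S : Finset ℕ} {L1 L2 : Language Sig}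
    (h1 : ∀ w ∈ L1, ∃ c, w = [c] ∧ (∃ a b t, isL S a b t c))
    (h2 : ∀ w ∈ L2, ∃ c, w = [c] ∧ (∃ a b t, isL S a b t c)) :
    SafeL (L1 + L2) := by
  apply safe_of_base
  intro w hw
  have hw' : ∃ c, w = [c] ∧ (∃ a b t, isL S a b t c) := by
    rcases (Language.mem_add L1 L2 w).mp hw with h | h
    · exact h1 w h
    · exact h2 w h
  obtain ⟨c1, rfl, ⟨a1, b1, t1, hc1⟩⟩ := hw'
  intro c hc
  rcases List.mem_cons.mp hc with rfl | hc
  · exact isL_ne hc1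
  · simp at hc

lemma safe_QQ {S : Finset ℕ} {F : Finset ((Bool × ℕ) × (Bool × ℕ))} :
    ∀ L ∈ QQ S F, SafeL L := by
  intro L hL
  rcases hL with (hL | hL) | hL
  · -- Qgood
    simp only [Qgood, Set.mem_insert_iff, Set.mem_singleton_iff] at hL
    rcases hL with rfl | rfl | rfl | rfl | rfl | rfl | rfl | rfl
    · -- Qg1 = {[ω]}
      constructor
      · left; intro w hw
        rw [Set.mem_singleton_iff.mp hw]
        exact noAB_cons (by simp) noAB_nil
      · right; intro w hw
        rw [Set.mem_singleton_iff.mp hw]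
        exact ⟨[], rfl, noOm_nil⟩
    · -- Qg2
      constructor
      · right; intro w hw
        rcases hw with rfl | rfl
        · exact ⟨Sig.alpha, [], Or.inl rfl, rfl, noAB_nil⟩
        · exact ⟨Sig.beta, [], Or.inr rfl, rfl, noAB_nil⟩
      · left; intro w hw
        rcases hw with rfl | rfl
        · exact noOm_cons (by simp) noOm_nil
        · exact noOm_cons (by simp) noOm_nil
    · exact safe_two (S := S)
        (fun w ⟨c1, c2, hw, h1, h2⟩ => ⟨c1, c2, hw, ⟨_, _, _, h1⟩, ⟨_, _, _, h2⟩⟩)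
        (fun w ⟨c1, c2, hw, h1, h2⟩ => ⟨c1, c2, hw, ⟨_, _, _, h1⟩, ⟨_, _, _, h2⟩⟩)
    · exact safe_two (S := S)
        (fun w ⟨c1, c2, hw, h1, h2⟩ => ⟨c1, c2, hw, ⟨_, _, _, h1⟩, ⟨_, _, _, h2⟩⟩)
        (fun w ⟨c1, c2, hw, h1, h2⟩ => ⟨c1, c2, hw, ⟨_, _, _, h1⟩, ⟨_, _, _, h2⟩⟩)
    · exact safe_one (S := S)
        (fun w ⟨c, hw, h⟩ => ⟨c, hw, ⟨_, _, _, h⟩⟩)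
        (fun w ⟨c, hw, h⟩ => ⟨c, hw, ⟨_, _, _, h⟩⟩)
    · exact safe_one (S := S)
        (fun w ⟨c, hw, h⟩ => ⟨c, hw, ⟨_, _, _, h⟩⟩)
        (fun w ⟨c, hw, h⟩ => ⟨c, hw, ⟨_, _, _, h⟩⟩)
    · exact safe_one (S := S)
        (fun w ⟨c, hw, h⟩ => ⟨c, hw, ⟨_, _, _, h⟩⟩)
        (fun w ⟨c, hw, h⟩ => ⟨c, hw, ⟨_, _, _, h⟩⟩)
    · exact safe_one (S := S)
        (fun w ⟨c, hw, h⟩ => ⟨c, hw, ⟨_, _, _, h⟩⟩)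
        (fun w ⟨c, hw, h⟩ => ⟨c, hw, ⟨_, _, _, h⟩⟩)
  · -- Qbad
    rcases hL with (rfl | rfl) | ⟨p, hp, rfl⟩
    · -- Qbad1
      constructor
      · right
        rintro w ⟨s, u, hs, -, hall, rfl⟩
        refine ⟨Sig.beta, _, Or.inr rfl, rfl, ?_⟩
        exact noAB_cons (by simp) (noAB_append (noAB_of_allS0 hall)
          (noAB_cons (by simp) noAB_nil))
      · right
        rintro w ⟨s, u, hs, -, hall, rfl⟩
        refine ⟨Sig.beta :: Sig.base true true true s :: u, by simp, ?_⟩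
        exact noOm_cons (by simp) (noOm_cons (by simp) (noOm_of_allS0 hall))
    · -- Qbad2
      constructor
      · right
        rintro w ⟨s, u, hs, -, hall, rfl⟩
        refine ⟨Sig.beta, _, Or.inr rfl, rfl, ?_⟩
        exact noAB_append (noAB_of_allS0 hall)
          (noAB_cons (by simp) (noAB_cons (by simp) noAB_nil))
      · right
        rintro w ⟨s, u, hs, -, hall, rfl⟩
        refine ⟨Sig.beta :: (u ++ [Sig.base false false true s]), by simp, ?_⟩
        exact noOm_cons (by simp) (noOm_append (noOm_of_allS0 hall)
          (noOm_cons (by simp) noOm_nil))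
    · -- QbadF
      constructor
      · right
        rintro w ⟨u, u', b, b', hu, hu', rfl⟩
        refine ⟨Sig.beta, _, Or.inr rfl, rfl, ?_⟩
        exact noAB_append (noAB_of_allS0 hu)
          (noAB_cons (by simp) (noAB_cons (by simp) (noAB_append (noAB_of_allS0 hu')
            (noAB_cons (by simp) noAB_nil))))
      · right
        rintro w ⟨u, u', b, b', hu, hu', rfl⟩
        refine ⟨Sig.beta :: (u ++ Sig.base b p.1.1 true p.1.2 ::
          Sig.base b' p.2.1 true p.2.2 :: u'), by simp, ?_⟩
        exact noOm_cons (by simp) (noOm_append (noOm_of_allS0 hu)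
          (noOm_cons (by simp) (noOm_cons (by simp) (noOm_of_allS0 hu'))))
  · -- Qugly
    rcases hL with rfl | rfl
    · constructor
      · right
        rintro w ⟨u, c, u', hu, hu', hc, -, rfl⟩
        refine ⟨Sig.alpha, _, Or.inl rfl, rfl, ?_⟩
        exact noAB_append (noAB_of_allS0 hu)
          (noAB_cons ⟨(inSigma0_ne hc).1, (inSigma0_ne hc).2.1⟩
            (noAB_append (noAB_of_allS0 hu') (noAB_cons (by simp) noAB_nil)))
      · right
        rintro w ⟨u, c, u', hu, hu', hc, -, rfl⟩
        refine ⟨Sig.alpha :: (u ++ c :: u'), by simp, ?_⟩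
        exact noOm_cons (by simp) (noOm_append (noOm_of_allS0 hu)
          (noOm_cons (inSigma0_ne hc).2.2 (noOm_of_allS0 hu')))
    · constructor
      · right
        rintro w ⟨u, c, u', hu, hu', hc, -, rfl⟩
        refine ⟨Sig.beta, _, Or.inr rfl, rfl, ?_⟩
        exact noAB_append (noAB_of_allS0 hu)
          (noAB_cons ⟨(inSigma0_ne hc).1, (inSigma0_ne hc).2.1⟩
            (noAB_append (noAB_of_allS0 hu') (noAB_cons (by simp) noAB_nil)))
      · right
        rintro w ⟨u, c, u', hu, hu', hc, -, rfl⟩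
        refine ⟨Sig.beta :: (u ++ c :: u'), by simp, ?_⟩
        exact noOm_cons (by simp) (noOm_append (noOm_of_allS0 hu)
          (noOm_cons (inSigma0_ne hc).2.2 (noOm_of_allS0 hu')))

end AuxSig
section AuxInv
variable {V : Type}

def InvAB (a b : V) (D : DB V (Bool × Sig)) : Prop :=
  (∀ p col c q, D p (col, c) q → (c = Sig.alpha ∨ c = Sig.beta) → p = a) ∧
  (∀ p col q, D p (col, Sig.omega) q → q = b)

lemma mem_colW {col col' : Bool} {c : Sig} {w : List Sig}
    (h : (col', c) ∈ colW col w) : c ∈ w ∧ col' = col := by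
  obtain ⟨d, hd, heq⟩ := List.mem_map.mp h
  obtain ⟨h1, h2⟩ := Prod.mk.injEq .. ▸ heq
  exact ⟨h2 ▸ hd, h1.symm⟩

lemma biRC_form {S : Finset ℕ} {F : Finset ((Bool × ℕ) × (Bool × ℕ))} {t : RCon (Bool × Sig)}
    (ht : t ∈ biRC (QQ S F)) :
    ∃ L ∈ QQ S F, ∃ cl cr : Bool, t.lhs = colW cl '' L ∧ t.rhs = colW cr '' L := by
  rcases ht with ⟨L, hL, rfl⟩ | ⟨L, hL, rfl⟩
  · exact ⟨L, hL, true, false, rfl, rfl⟩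
  · exact ⟨L, hL, false, true, rfl, rfl⟩

lemma inv_chain {S : Finset ℕ} {F : Finset ((Bool × ℕ) × (Bool × ℕ))} {a b : V}
    {D : DB V (Bool × Sig)} (hinv : InvAB a b D) (r : Req V (Bool × Sig))
    (hr : r ∈ rq (biRC (QQ S F)) D)
    {w : List (Bool × Sig)} (hw : w ∈ r.2.2.rhs)
    (vs : List V) {p q : V} {col : Bool} {c : Sig}
    (hc : chainOf (r.1 :: (vs ++ [r.2.1])) w p (col, c) q)
    (hlen : vs.length + 1 = w.length) :
    ((c = Sig.alpha ∨ c = Sig.beta) → p = a) ∧ (c = Sig.omega → q = b) := by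
  obtain ⟨ht, hlhs, -⟩ := hr
  obtain ⟨L, hL, cl, cr, htl, htr⟩ := biRC_form ht
  obtain ⟨w₀, hw₀, rfl⟩ : ∃ w₀ ∈ L, colW cr w₀ = w := by rw [htr] at hw; exact hw
  obtain ⟨wl, hwl, hpl⟩ := hlhs
  obtain ⟨w₁, hw₁, rfl⟩ : ∃ w₁ ∈ L, colW cl w₁ = wl := by rw [htl] at hwl; exact hwl
  have hsafe := safe_QQ L hL
  have hmem := mem_colW (chainOf_mem _ _ hc)
  constructor
  · intro hab
    rcases hsafe.1 with hno | hhead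
    · exact absurd hab (by simpa using (hno w₀ hw₀ c hmem.1))
    · obtain ⟨c₀, w', hc₀, hw0eq, hnw'⟩ := hhead w₀ hw₀
      subst hw0eq
      have hnotin : (col, c) ∉ colW cr w' := by
        intro hmem'
        exact absurd hab (by simpa using hnw' c (mem_colW hmem').1)
      have hp : p = r.1 := chainOf_head hc hnotin
      -- now use lhs
      obtain ⟨c₁, w₁', hc₁, hw1eq, -⟩ := hhead w₁ hw₁
      subst hw1eq
      obtain ⟨z, hz, -⟩ := hpl
      exact hp.trans (hinv.1 r.1 cl c₁ z hz hc₁)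
  · intro hom
    subst hom
    rw [hmem.2] at hc
    rcases hsafe.2 with hno | hlast
    · exact absurd rfl (hno w₀ hw₀ _ hmem.1)
    · obtain ⟨w', hw0eq, hnw'⟩ := hlast w₀ hw₀
      subst hw0eq
      have hceq : colW cr (w' ++ [Sig.omega]) = colW cr w' ++ [(cr, Sig.omega)] := by
        simp [colW]
      rw [hceq] at hc hlen
      have hnotin : (cr, Sig.omega) ∉ colW cr w' := by
        intro hmem'
        exact hnw' _ (mem_colW hmem').1 rfl
      have hq : q = r.2.1 := by
        refine chainOf_last _ vs r.1 r.2.1 ?_ hc hnotin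
        simpa using hlen
      obtain ⟨w₁', hw1eq, -⟩ := hlast w₁ hw₁
      subst hw1eq
      have hpl' : pathSat D r.1 (colW cl w₁' ++ [(cl, Sig.omega)]) r.2.1 := by
        have : colW cl (w₁' ++ [Sig.omega]) = colW cl w₁' ++ [(cl, Sig.omega)] := by
          simp [colW]
        rwa [this] at hpl
      obtain ⟨z, hz⟩ := pathSat_last _ _ hpl'
      exact hq.trans (hinv.2 z cl r.2.1 hz)

lemma inv_step {S : Finset ℕ} {F : Finset ((Bool × ℕ) × (Bool × ℕ))} {a b : V}
    {D D' : DB V (Bool × Sig)} (hinv : InvAB a b D)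
    (hs : Step (biRC (QQ S F)) D D') : InvAB a b D' := by
  obtain ⟨wch, vch, h1, -, h3⟩ := hs
  constructor
  · intro p col c q hpq hab
    rcases (h3 p (col, c) q).mp hpq with hD | ⟨r, hr, hc⟩
    · exact hinv.1 p col c q hD hab
    · obtain ⟨hw1, hlen, -, -⟩ := h1 r hr
      exact (inv_chain hinv r hr hw1 _ hc hlen).1 hab
  · intro p col q hpq
    rcases (h3 p (col, Sig.omega) q).mp hpq with hD | ⟨r, hr, hc⟩
    · exact hinv.2 p col q hD
    · obtain ⟨hw1, hlen, -, -⟩ := h1 r hr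
      exact (inv_chain hinv r hr hw1 _ hc hlen).2 rfl

lemma startBlock_kstar_no {S : Finset ℕ} {u : List Sig}
    (hu : u ∈ KStar.kstar (startBlock S)) : noAB u ∧ noOm u := by
  obtain ⟨Ls, rfl, hLs⟩ := Language.mem_kstar.mp hu
  constructor <;> intro c hc <;>
    obtain ⟨y, hy, hcy⟩ := List.mem_flatten.mp hc <;>
    obtain ⟨c1, c2, rfl, h1, h2⟩ := hLs y hy <;>
    rcases List.mem_cons.mp hcy with rfl | hcy
  · exact ⟨(isL_ne h1).1, (isL_ne h1).2.1⟩
  · rcases List.mem_cons.mp hcy with rfl | hcy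
    · exact ⟨(isL_ne h2).1, (isL_ne h2).2.1⟩
    · simp at hcy
  · exact (isL_ne h1).2.2
  · rcases List.mem_cons.mp hcy with rfl | hcy
    · exact (isL_ne h2).2.2
    · simp at hcy

lemma inv_D0 {S : Finset ℕ} {a b : V} {q : List Sig} (hq : q ∈ Qstart S)
    {D₀ : DB V (Bool × Sig)} (hD₀ : IsChainStruct D₀ a (greenW q) b) : InvAB a b D₀ := by
  obtain ⟨u, hu, -, rfl⟩ := hq
  obtain ⟨hnab, hnom⟩ := startBlock_kstar_no hu
  obtain ⟨vs, hlen, -, hiff⟩ := hD₀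
  constructor
  · intro p col c z hpz hab
    have hc := (hiff p (col, c) z).mp hpz
    have heq : greenW (Sig.alpha :: (u ++ [Sig.omega])) =
        (true, Sig.alpha) :: (colW true u ++ [(true, Sig.omega)]) := by
      simp [greenW, colW]
    rw [heq] at hc
    have hnotin : (col, c) ∉ colW true u ++ [(true, Sig.omega)] := by
      intro hmem
      rcases List.mem_append.mp hmem with hmem | hmem
      · have := hnab c (mem_colW hmem).1
        rcases hab with rfl | rfl
        · exact this.1 rfl
        · exact this.2 rfl
      · simp only [List.mem_singleton, Prod.mk.injEq] at hmem
        rcases hab with rfl | rfl <;> simp at hmem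
    exact chainOf_head hc hnotin
  · intro p col z hpz
    have hc := (hiff p (col, Sig.omega) z).mp hpz
    have hcol : col = true := by
      have := (mem_colW (w := Sig.alpha :: (u ++ [Sig.omega]))
        (chainOf_mem _ _ ((by simpa [greenW, colW] using hc)))).2
      exact this
    subst hcol
    have heq : greenW (Sig.alpha :: (u ++ [Sig.omega])) =
        colW true (Sig.alpha :: u) ++ [(true, Sig.omega)] := by
      simp [greenW, colW]
    rw [heq] at hc
    have hnotin : (true, Sig.omega) ∉ colW true (Sig.alpha :: u) := by
      intro hmem
      have hm := (mem_colW hmem).1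
      rcases List.mem_cons.mp hm with h | h
      · exact absurd h (by simp)
      · exact hnom _ h rfl
    refine chainOf_last _ vs a b ?_ hc hnotin
    have : (greenW (Sig.alpha :: (u ++ [Sig.omega]))).length = u.length + 2 := by
      simp [greenW]
    rw [this] at hlen
    simp [colW]
    omega

end AuxInv
section AuxFinal

lemma badugly_shape {S : Finset ℕ} {F : Finset ((Bool × ℕ) × (Bool × ℕ))}
    {L : Language Sig} (hL : L ∈ Qbad S F ∪ Qugly S) {w : List Sig} (hw : w ∈ L) :
    (∃ c w', (c = Sig.alpha ∨ c = Sig.beta) ∧ w = c :: w') ∧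
      ∃ w'', w = w'' ++ [Sig.omega] := by
  rcases hL with ((rfl | rfl) | ⟨p, hp, rfl⟩) | (rfl | rfl)
  · obtain ⟨s, u, -, -, -, rfl⟩ := hw
    exact ⟨⟨_, _, Or.inr rfl, rfl⟩, Sig.beta :: Sig.base true true true s :: u, by simp⟩
  · obtain ⟨s, u, -, -, -, rfl⟩ := hw
    exact ⟨⟨_, _, Or.inr rfl, rfl⟩,
      Sig.beta :: (u ++ [Sig.base false false true s]), by simp⟩
  · obtain ⟨u, u', b, b', -, -, rfl⟩ := hw
    exact ⟨⟨_, _, Or.inr rfl, rfl⟩,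
      Sig.beta :: (u ++ Sig.base b p.1.1 true p.1.2 :: Sig.base b' p.2.1 true p.2.2 :: u'),
      by simp⟩
  · obtain ⟨u, c, u', -, -, -, -, rfl⟩ := hw
    exact ⟨⟨_, _, Or.inl rfl, rfl⟩, Sig.alpha :: (u ++ c :: u'), by simp⟩
  · obtain ⟨u, c, u', -, -, -, -, rfl⟩ := hw
    exact ⟨⟨_, _, Or.inr rfl, rfl⟩, Sig.beta :: (u ++ c :: u'), by simp⟩

lemma badugly_mem_Q0L {S : Finset ℕ} {F : Finset ((Bool × ℕ) × (Bool × ℕ))}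
    {L : Language Sig} (hL : L ∈ Qbad S F ∪ Qugly S) {w : List Sig} (hw : w ∈ L) :
    w ∈ Q0L S F := by
  have hmem : ∀ {l m : Language Sig} {x : List Sig}, x ∈ l ∨ x ∈ m → x ∈ l + m :=
    fun h => (Language.mem_add _ _ _).mpr h
  rcases hL with ((rfl | rfl) | ⟨p, hp, rfl⟩) | (rfl | rfl)
  · exact hmem (Or.inl (hmem (Or.inl (hmem (Or.inl (hmem (Or.inl (hmem (Or.inr hw)))))))))
  · exact hmem (Or.inl (hmem (Or.inl (hmem (Or.inl (hmem (Or.inr hw)))))))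
  · exact hmem (Or.inl (hmem (Or.inl (hmem (Or.inr ⟨p, hp, hw⟩)))))
  · exact hmem (Or.inl (hmem (Or.inr hw)))
  · exact hmem (Or.inr hw)

end AuxFinal
/-- Principle II.  Let `H` be a final position of a play started from
`D₀ = (G(q))[a,b]` with `q ∈ Q_start`.  If a word of some `L ∈ 𝒬_bad ∪ 𝒬_ugly` occurs in
`H` (in green or in red) between some vertices, then `H ⊨ (R(Q₀))(a,b)`, i.e. Fugitive
loses. -/
theorem principle_II (S : Finset ℕ) (F : Finset ((Bool × ℕ) × (Bool × ℕ)))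
    (hS : 0 ∈ S) (hF : ∀ p ∈ F, p.1.2 ∈ S ∧ p.2.2 ∈ S)
    {V : Type} (a b : V) (q : List Sig) (hq : q ∈ Qstart S)
    (D₀ H : DB V (Bool × Sig)) (hD₀ : IsChainStruct D₀ a (greenW q) b)
    (hH : FinalPos (biRC (QQ S F)) D₀ H)
    (hocc : ∃ x y : V, ∃ L ∈ Qbad S F ∪ Qugly S,
      langSat H (greenL L) x y ∨ langSat H (redL L) x y) :
    langSat H (redL (Q0L S F)) a b := by
  obtain ⟨x, y, L, hL, hgr⟩ := hocc
  have hLQQ : L ∈ QQ S F := by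
    rcases hL with h | h
    · exact Or.inl (Or.inr h)
    · exact Or.inr h
  -- H satisfies all constraints, so we may assume a red occurrence
  have hred : langSat H (redL L) x y := by
    rcases hgr with hg | hr
    · exact final_sat hH (rcFwd L) (Or.inl ⟨L, hLQQ, rfl⟩) x y hg
    · exact hr
  -- the invariant holds in H
  have hinvH : InvAB a b H := by
    obtain ⟨seq, h0, hs, hlim⟩ := hH
    have hinv : ∀ i, InvAB a b (seq i) := by
      intro i
      induction i with
      | zero => rw [h0]; exact inv_D0 hq hD₀
      | succ i ih => exact inv_step ih (hs i)
    constructor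
    · intro p col c z hpz hab
      obtain ⟨i, hi⟩ := (hlim p (col, c) z).mp hpz
      exact (hinv i).1 p col c z hi hab
    · intro p col z hpz
      obtain ⟨i, hi⟩ := (hlim p (col, Sig.omega) z).mp hpz
      exact (hinv i).2 p col z hi
  obtain ⟨wbar, ⟨w₀, hw₀L, rfl⟩, hp⟩ := hred
  obtain ⟨⟨c, w', hcab, hw0h⟩, w'', hw0l⟩ := badugly_shape hL hw₀L
  have hx : x = a := by
    have hp1 : pathSat H x ((false, c) :: redW w') y := by
      rw [hw0h] at hp; exact hp
    obtain ⟨z, hz, -⟩ := hp1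
    exact hinvH.1 x false c z hz hcab
  have hy : y = b := by
    have hp2 : pathSat H x (redW w'' ++ [(false, Sig.omega)]) y := by
      rw [hw0l] at hp
      simpa [redW] using hp
    obtain ⟨z, hz⟩ := pathSat_last _ _ hp2
    exact hinvH.2 z false y hz
  subst hx
  subst hy
  exact ⟨redW w₀, ⟨w₀, badugly_mem_Q0L hL hw₀L, rfl⟩, hp⟩
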